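/- arXiv:2309.01939 — 2 statements merged into one kernel-verified Lean document; each statement's English description precedes it below -/
import Mathlib

section
/- Let $\alpha<0<\beta$ and $\varepsilon^+<0$, $\varepsilon_{refl}<0$ be real numbers satisfying $\varepsilon^+-\varepsilon_{refl}=\alpha+\beta$, and suppose $|\varepsilon_{refl}|\le c\,\min\{|\alpha|,|\beta|\}$ where $c=\frac{\cosh(q)-1}{\cosh(q)+1}$ for some $q\ge 0$. Then $(|\alpha|+|\beta|)-(|\varepsilon^+|+|\varepsilon_{refl}|)=2(|\beta|-|\varepsilon_{refl}|)\ge \frac{4|\beta|}{\cosh(q)+1}$. -/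
/-- Cancellation estimate in a shock–rarefaction interaction producing a shock:
the drop of the linear functional equals `2(|β| - |ε_refl|)` and is at least
`4|β|/(cosh q + 1)`. -/
theorem cancellation_SR_to_S
    (q α β εp εr : ℝ) (hq : 0 ≤ q)
    (hα : α < 0) (hβ : 0 < β) (hεp : εp < 0) (hεr : εr < 0)
    (hid : εp - εr = α + β)
    (hrefl : |εr| ≤ (Real.cosh q - 1) / (Real.cosh q + 1) * min |α| |β|) :
    (|α| + |β|) - (|εp| + |εr|) = 2 * (|β| - |εr|) ∧
    2 * (|β| - |εr|) ≥ 4 * |β| / (Real.cosh q + 1) := by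
  have h1 : (1:ℝ) ≤ Real.cosh q := Real.one_le_cosh q
  have hpos : (0:ℝ) < Real.cosh q + 1 := by linarith
  rw [abs_of_neg hα, abs_of_pos hβ, abs_of_neg hεp, abs_of_neg hεr] at *
  constructor
  · linarith
  · have hmin : min (-α) β ≤ β := min_le_right _ _
    have hc : (Real.cosh q - 1) / (Real.cosh q + 1) * min (-α) β ≤
        (Real.cosh q - 1) / (Real.cosh q + 1) * β := by
      apply mul_le_mul_of_nonneg_left hmin
      exact div_nonneg (by linarith) hpos.le
    have key : -εr ≤ (Real.cosh q - 1) / (Real.cosh q + 1) * β := le_trans hrefl hc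
    rw [ge_iff_le, div_le_iff₀ hpos]
    rw [div_mul_eq_mul_div, le_div_iff₀ hpos] at key
    linarith
end

section
/- Fix $\alpha>0$, $\rho_\ell>0$, $\mathtt v_\ell\in\mathbb{R}$ and $p(\rho)=\alpha^2\rho$. For $0<\delta\le\rho_\ell$, define $\mathtt v_r(\delta)=\mathtt v_\ell-\sqrt{\frac{(p(\delta)-p(\rho_\ell))(\delta-\rho_\ell)}{\delta\rho_\ell}}$ and let $\sigma(\delta)=\frac{\rho_\ell\mathtt v_\ell-\delta\,\mathtt v_r(\delta)}{\rho_\ell-\delta}$. Then as $\delta\to 0^+$: (i) $\sigma(\delta)\to\mathtt v_\ell$; (ii) $\delta\,\mathtt v_r(\delta)\to 0$; and (iii) $\delta\,\mathtt v_r(\delta)^2\to \alpha^2\rho_\ell = p(\rho_\ell)$. -/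
/-!
For `δ > 0` the radicand `g(δ)` of `v_r(δ)` is nonnegative and `δ g(δ) = α²(ρ_ℓ - δ)²/ρ_ℓ`,
so `δ g(δ) → α² ρ_ℓ`. Writing `δ √g = √δ · √(δ g)` shows `δ √g → 0` while `δ (√g)² = δ g → α² ρ_ℓ`;
since `v_r = v_ℓ - √g`, the momentum `δ v_r` and the energy `δ v_r²` inherit these limits, and the
Rankine–Hugoniot speed `(ρ_ℓ v_ℓ - δ v_r)/(ρ_ℓ - δ)` tends to `v_ℓ`.
-/

open Filter Topology

lemma tendsto_mul_sqrt_nhdsGT_zero {g : ℝ → ℝ} {L : ℝ}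
    (hg : Tendsto (fun δ => δ * g δ) (𝓝[>] 0) (𝓝 L)) (hg0 : ∀ᶠ δ in 𝓝[>] 0, 0 ≤ g δ) :
    Tendsto (fun δ => δ * √(g δ)) (𝓝[>] 0) (𝓝 0) ∧
      Tendsto (fun δ => δ * √(g δ) ^ 2) (𝓝[>] 0) (𝓝 L) := by
  have hpos : ∀ᶠ δ in 𝓝[>] (0 : ℝ), 0 < δ := self_mem_nhdsWithin
  constructor
  · have hsqrt : Tendsto (fun δ : ℝ => √δ * √(δ * g δ)) (𝓝[>] 0) (𝓝 (√0 * √L)) :=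
      ((Real.continuous_sqrt.tendsto 0).mono_left nhdsWithin_le_nhds).mul hg.sqrt
    rw [Real.sqrt_zero, zero_mul] at hsqrt
    refine hsqrt.congr' ?_
    filter_upwards [hpos] with δ hδ
    rw [Real.sqrt_mul hδ.le, ← mul_assoc, Real.mul_self_sqrt hδ.le]
  · refine hg.congr' ?_
    filter_upwards [hg0] with δ hδ
    rw [Real.sq_sqrt hδ]

lemma tendsto_mul_sub_of_tendsto_mul {s : ℝ → ℝ} {l : Filter ℝ} {L : ℝ} (v : ℝ)
    (hs : Tendsto (fun δ => δ * s δ) l (𝓝 0)) (hs2 : Tendsto (fun δ => δ * s δ ^ 2) l (𝓝 L))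
    (hδ : Tendsto id l (𝓝 0)) :
    Tendsto (fun δ => δ * (v - s δ)) l (𝓝 0) ∧
      Tendsto (fun δ => δ * (v - s δ) ^ 2) l (𝓝 L) := by
  constructor
  · have h := (hδ.mul_const v).sub hs
    simp only [zero_mul, sub_zero, id] at h
    exact h.congr fun δ => by ring
  · have h := ((hδ.mul_const (v ^ 2)).sub (hs.const_mul (2 * v))).add hs2
    simp only [zero_mul, mul_zero, sub_zero, zero_add, id] at h
    exact h.congr fun δ => by ring

lemma tendsto_rankineHugoniot_speed {m : ℝ → ℝ} {l : Filter ℝ} {ρ : ℝ} (v : ℝ) (hρ : ρ ≠ 0)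
    (hm : Tendsto m l (𝓝 0)) (hδ : Tendsto id l (𝓝 0)) :
    Tendsto (fun δ => (ρ * v - m δ) / (ρ - δ)) l (𝓝 v) := by
  have h := ((tendsto_const_nhds (x := ρ * v)).sub hm).div
    ((tendsto_const_nhds (x := ρ)).sub hδ) (by simpa using hρ)
  simp only [sub_zero, mul_div_cancel_left₀ v hρ] at h
  exact h

lemma tendsto_mul_isothermal_radicand {α ρl : ℝ} (hρl : ρl ≠ 0) :
    Tendsto (fun δ => δ * ((α ^ 2 * δ - α ^ 2 * ρl) * (δ - ρl) / (δ * ρl))) (𝓝[>] 0)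
      (𝓝 (α ^ 2 * ρl)) := by
  have hcont : Tendsto (fun δ : ℝ => α ^ 2 * (δ - ρl) ^ 2 / ρl) (𝓝[>] 0)
      (𝓝 (α ^ 2 * (0 - ρl) ^ 2 / ρl)) :=
    tendsto_nhdsWithin_of_tendsto_nhds (by fun_prop : Continuous _).continuousAt
  have hval : α ^ 2 * (0 - ρl) ^ 2 / ρl = α ^ 2 * ρl := by field_simp; ring
  rw [hval] at hcont
  refine hcont.congr' ?_
  filter_upwards [self_mem_nhdsWithin] with δ (hδ : 0 < δ)
  field_simp

lemma isothermal_radicand_nonneg {α ρl δ : ℝ} (hρl : 0 < ρl) (hδ : 0 < δ) :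
    0 ≤ (α ^ 2 * δ - α ^ 2 * ρl) * (δ - ρl) / (δ * ρl) := by
  have h : (α ^ 2 * δ - α ^ 2 * ρl) * (δ - ρl) = α ^ 2 * (δ - ρl) ^ 2 := by ring
  rw [h]
  positivity

theorem vacuum_limit_of_two_shock_general
    (α ρl vl : ℝ) (hρl : 0 < ρl) :
    let p : ℝ → ℝ := fun ρ => α ^ 2 * ρ
    let vr : ℝ → ℝ := fun δ => vl - Real.sqrt ((p δ - p ρl) * (δ - ρl) / (δ * ρl))
    let σ : ℝ → ℝ := fun δ => (ρl * vl - δ * vr δ) / (ρl - δ)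
    Filter.Tendsto σ (nhdsWithin 0 (Set.Ioi 0)) (nhds vl) ∧
    Filter.Tendsto (fun δ => δ * vr δ) (nhdsWithin 0 (Set.Ioi 0)) (nhds 0) ∧
    Filter.Tendsto (fun δ => δ * (vr δ) ^ 2) (nhdsWithin 0 (Set.Ioi 0))
      (nhds (α ^ 2 * ρl)) := by
  intro p vr σ
  have hδ : Tendsto (id : ℝ → ℝ) (𝓝[>] 0) (𝓝 0) := tendsto_nhdsWithin_of_tendsto_nhds tendsto_id
  have hg0 : ∀ᶠ δ in 𝓝[>] (0 : ℝ), 0 ≤ (p δ - p ρl) * (δ - ρl) / (δ * ρl) := by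
    filter_upwards [self_mem_nhdsWithin] with δ hδ
    exact isothermal_radicand_nonneg hρl hδ
  obtain ⟨hs, hs2⟩ :=
    tendsto_mul_sqrt_nhdsGT_zero (tendsto_mul_isothermal_radicand hρl.ne') hg0
  obtain ⟨hmomentum, henergy⟩ := tendsto_mul_sub_of_tendsto_mul vl hs hs2 hδ
  exact ⟨tendsto_rankineHugoniot_speed vl hρl.ne' hmomentum hδ, hmomentum, henergy⟩

/-- Vanishing-density limit of a 2-shock for isothermal Euler with
`p(ρ) = α²ρ`: the shock speed tends to `v_ℓ`, the momentum of the right state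
vanishes, and `δ v_r(δ)²` converges to the concentration term `p(ρ_ℓ)`. -/
theorem vacuum_limit_of_two_shock
    (α ρl vl : ℝ) (hα : 0 < α) (hρl : 0 < ρl) :
    let p : ℝ → ℝ := fun ρ => α ^ 2 * ρ
    let vr : ℝ → ℝ := fun δ => vl - Real.sqrt ((p δ - p ρl) * (δ - ρl) / (δ * ρl))
    let σ : ℝ → ℝ := fun δ => (ρl * vl - δ * vr δ) / (ρl - δ)
    Filter.Tendsto σ (nhdsWithin 0 (Set.Ioi 0)) (nhds vl) ∧
    Filter.Tendsto (fun δ => δ * vr δ) (nhdsWithin 0 (Set.Ioi 0)) (nhds 0) ∧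
    Filter.Tendsto (fun δ => δ * (vr δ) ^ 2) (nhdsWithin 0 (Set.Ioi 0))
      (nhds (α ^ 2 * ρl)) :=
  vacuum_limit_of_two_shock_general α ρl vl hρl
end
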